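/- Projection formulation of the Kochen-Specker Theorem: Let H be a finite-dimensional complex Hilbert space with dim(H) > 2. Then there is no function w assigning to every orthogonal projection P on H a value w(P) ∈ {0,1} such that for every finite family of mutually orthogonal projections P₁, …, Pₙ with P₁ + ⋯ + Pₙ = 1 (the identity operator), exactly one of the values w(P₁), …, w(Pₙ) equals 1. (This is the form of the theorem expressing that projection operators, interpreted as properties, cannot all be assigned simultaneous definite truth values.) -/

import Mathlib

/-!
A Kochen–Specker colouring picks exactly one line out of every orthogonal basis. Take an
orthonormal basis `e` whose first vector spans the picked line; then every other line of `e` is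
unpicked. Replacing `e₀, e₁, e₂` by any orthogonal triple of their span still gives a basis, so
on the lines through integer points `x₀e₀ + x₁e₁ + x₂e₂` the colouring picks exactly one line of
every orthogonal triple, and picks `(1, 0, 0)`. The 25 orthogonal triples of `ksBases` admit no
such choice.
-/

open scoped InnerProductSpace

theorem existsUnique_sum_iff_inl {α β : Type*} {p : α ⊕ β → Prop} (hp : ∀ b, ¬p (.inr b)) :
    (∃! x, p x) ↔ ∃! a, p (.inl a) := by
  simp only [ExistsUnique, Sum.exists, Sum.forall]
  grind

theorem existsUnique_fin_three_iff {p : Fin 3 → Prop} :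
    (∃! i, p i) ↔ (p 0 ∨ p 1 ∨ p 2) ∧ ¬(p 0 ∧ p 1) ∧ ¬(p 0 ∧ p 2) ∧ ¬(p 1 ∧ p 2) := by
  simp only [ExistsUnique, Fin.exists_fin_succ, Fin.forall_fin_succ, Fin.exists_fin_zero,
    Fin.forall_fin_zero, Fin.succ_zero_eq_one, Fin.succ_one_eq_two]
  grind

section Projections

variable {𝕜 E : Type*} [RCLike 𝕜] [NormedAddCommGroup E] [InnerProductSpace 𝕜 E]

theorem starProjection_span_singleton_mul_eq_zero {u v : E} (h : ⟪u, v⟫_𝕜 = 0) :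
    (𝕜 ∙ u).starProjection * (𝕜 ∙ v).starProjection = 0 :=
  (Submodule.isOrtho_span.2 (by simpa)).starProjection_comp_starProjection

theorem sum_starProjection_span_singleton_eq_one [FiniteDimensional 𝕜 E] {ι : Type*} [Fintype ι]
    {v : ι → E} (hv : ∀ i, v i ≠ 0) (ho : Pairwise fun i j => ⟪v i, v j⟫_𝕜 = 0)
    (hcard : Fintype.card ι = Module.finrank 𝕜 E) :
    ∑ i, (𝕜 ∙ v i).starProjection = 1 := by
  have hspan : ⨆ i, 𝕜 ∙ v i = ⊤ := by
    rw [← Submodule.span_range_eq_iSup]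
    exact (linearIndependent_of_ne_zero_of_inner_eq_zero hv ho).span_eq_top_of_card_eq_finrank'
      hcard
  have hfam : OrthogonalFamily 𝕜 (fun i => 𝕜 ∙ v i) fun i => (𝕜 ∙ v i).subtypeₗᵢ :=
    .of_pairwise fun i j hij => Submodule.isOrtho_span.2 (by simpa using ho hij)
  ext x
  simpa using hfam.sum_projection_of_mem_iSup x (hspan ▸ Submodule.mem_top)

end Projections

section LatticeEmbed

variable {𝕜 E : Type*} [RCLike 𝕜] [NormedAddCommGroup E] [InnerProductSpace 𝕜 E]
  {ι κ : Type*} [Fintype ι] [Fintype κ]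

noncomputable def latticeEmbed (e : OrthonormalBasis (ι ⊕ κ) 𝕜 E) (x : ι → ℤ) : E :=
  ∑ i, (x i : 𝕜) • e (.inl i)

theorem inner_latticeEmbed (e : OrthonormalBasis (ι ⊕ κ) 𝕜 E) (x y : ι → ℤ) :
    ⟪latticeEmbed e x, latticeEmbed e y⟫_𝕜 = ((x ⬝ᵥ y : ℤ) : 𝕜) := by
  have := (e.orthonormal.comp _ Sum.inl_injective).inner_sum (fun i => (x i : 𝕜)) (y ·)
  simp_all [latticeEmbed, dotProduct]

theorem inner_latticeEmbed_inr (e : OrthonormalBasis (ι ⊕ κ) 𝕜 E) (x : ι → ℤ) (k : κ) :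
    ⟪latticeEmbed e x, e (.inr k)⟫_𝕜 = 0 := by
  classical
  simp [latticeEmbed, sum_inner, inner_smul_left, e.inner_eq_ite]

theorem latticeEmbed_ne_zero (e : OrthonormalBasis (ι ⊕ κ) 𝕜 E) {x : ι → ℤ} (hx : x ≠ 0) :
    latticeEmbed e x ≠ 0 := by
  intro h
  have := inner_latticeEmbed e x x
  rw [h, inner_zero_left, eq_comm, Int.cast_eq_zero, dotProduct_self_eq_zero] at this
  exact hx this

theorem latticeEmbed_single [DecidableEq ι] (e : OrthonormalBasis (ι ⊕ κ) 𝕜 E) (i : ι) :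
    latticeEmbed e (Pi.single i 1) = e (.inl i) := by
  simp [latticeEmbed, Pi.single_apply]

end LatticeEmbed

section KochenSpecker

variable {𝕜 E : Type*} [RCLike 𝕜] [NormedAddCommGroup E] [InnerProductSpace 𝕜 E]
  [CompleteSpace E]

def IsKSColoring (Φ : (E →L[𝕜] E) → Prop) : Prop :=
  ∀ (n : ℕ) (P : Fin n → (E →L[𝕜] E)), (∀ i, IsSelfAdjoint (P i)) → (∀ i, P i * P i = P i) →
    (∀ i j, i ≠ j → P i * P j = 0) → ∑ i, P i = 1 → ∃! i, Φ (P i)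

variable [FiniteDimensional 𝕜 E] {Φ : (E →L[𝕜] E) → Prop}

theorem IsKSColoring.existsUnique_span_singleton (hΦ : IsKSColoring Φ) {ι : Type*} [Fintype ι]
    {v : ι → E} (hv : ∀ i, v i ≠ 0) (ho : Pairwise fun i j => ⟪v i, v j⟫_𝕜 = 0)
    (hcard : Fintype.card ι = Module.finrank 𝕜 E) :
    ∃! i, Φ (𝕜 ∙ v i).starProjection := by
  let σ := Fintype.equivFin ι
  rw [σ.existsUnique_congr_left]
  refine hΦ _ _ (fun k => isSelfAdjoint_starProjection _)
    (fun k => (Submodule.isIdempotentElem_starProjection _).eq)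
    (fun k l hkl => starProjection_span_singleton_mul_eq_zero (ho (σ.symm.injective.ne hkl))) ?_
  rw [σ.symm.sum_comp (fun i => (𝕜 ∙ v i).starProjection)]
  exact sum_starProjection_span_singleton_eq_one hv ho hcard

theorem IsKSColoring.exists_orthonormalBasis_sum_iff_eq_inl {d : ℕ} (hΦ : IsKSColoring Φ)
    (hd : d ≤ Module.finrank 𝕜 E) (i₀ : Fin d) :
    ∃ (m : ℕ) (e : OrthonormalBasis (Fin d ⊕ Fin m) 𝕜 E),
      ∀ i, Φ (𝕜 ∙ e i).starProjection ↔ i = .inl i₀ := by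
  obtain ⟨m, hm⟩ := Nat.exists_eq_add_of_le hd
  let b := (stdOrthonormalBasis 𝕜 E).reindex (Fintype.equivOfCardEq (by simp [hm]) :
    Fin (Module.finrank 𝕜 E) ≃ Fin d ⊕ Fin m)
  obtain ⟨j, hj, huniq⟩ := hΦ.existsUnique_span_singleton (v := b) b.orthonormal.ne_zero
    (fun i j hij => b.orthonormal.inner_eq_zero hij) (by simp [hm])
  refine ⟨m, b.reindex (Equiv.swap j (.inl i₀)), fun i => ?_⟩
  rw [OrthonormalBasis.reindex_apply, Equiv.symm_swap]
  constructor
  · intro h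
    simpa [Equiv.swap_apply_eq_iff] using huniq _ h
  · rintro rfl
    simpa using hj

theorem IsKSColoring.existsUnique_latticeEmbed {ι κ : Type*} [Fintype ι] [Fintype κ]
    (hΦ : IsKSColoring Φ) (e : OrthonormalBasis (ι ⊕ κ) 𝕜 E)
    (he : ∀ k, ¬Φ (𝕜 ∙ e (.inr k)).starProjection) {b : ι → ι → ℤ} (hb : ∀ i, b i ≠ 0)
    (hbo : Pairwise fun i j => b i ⬝ᵥ b j = 0) :
    ∃! i, Φ (𝕜 ∙ latticeEmbed e (b i)).starProjection := by
  let v : ι ⊕ κ → E := Sum.elim (fun i => latticeEmbed e (b i)) (fun k => e (.inr k))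
  have hv : ∀ j, v j ≠ 0
    | .inl i => latticeEmbed_ne_zero e (hb i)
    | .inr k => e.orthonormal.ne_zero _
  have ho : Pairwise fun j j' => ⟪v j, v j'⟫_𝕜 = 0
    | .inl i, .inl i', h => by simp [v, inner_latticeEmbed, hbo (ne_of_apply_ne Sum.inl h)]
    | .inl i, .inr k, _ => inner_latticeEmbed_inr e _ k
    | .inr k, .inl i, _ => inner_eq_zero_symm.1 (inner_latticeEmbed_inr e _ k)
    | .inr k, .inr k', h => e.orthonormal.inner_eq_zero h
  have hcard : Fintype.card (ι ⊕ κ) = Module.finrank 𝕜 E :=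
    (Module.finrank_eq_card_basis e.toBasis).symm
  exact (existsUnique_sum_iff_inl he).1 (hΦ.existsUnique_span_singleton hv ho hcard)

end KochenSpecker

-- Found by computer search. Once `(1, 0, 0)` is picked, unit propagation after one case split
-- (is `(1, 0, 1)` picked?) reaches a contradiction.
def ksBases : List (Fin 3 → Fin 3 → ℤ) := [
  ![![0, 0, 1], ![0, 1, 0], ![1, 0, 0]],
  ![![0, 0, 1], ![1, -1, 0], ![1, 1, 0]],
  ![![0, 0, 1], ![1, 2, 0], ![2, -1, 0]],
  ![![0, 1, -1], ![0, 1, 1], ![1, 0, 0]],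
  ![![0, 1, -1], ![1, 1, 1], ![2, -1, -1]],
  ![![0, 1, 0], ![1, 0, -2], ![2, 0, 1]],
  ![![0, 1, 0], ![1, 0, -1], ![1, 0, 1]],
  ![![0, 1, 0], ![1, 0, 2], ![2, 0, -1]],
  ![![0, 1, 1], ![1, 1, -1], ![2, -1, 1]],
  ![![1, -2, -1], ![1, 0, 1], ![1, 1, -1]],
  ![![1, -2, 1], ![1, 0, -1], ![1, 1, 1]],
  ![![1, -1, -2], ![1, -1, 1], ![1, 1, 0]],
  ![![1, -1, -2], ![1, 5, -2], ![2, 0, 1]],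
  ![![1, -1, -1], ![1, -1, 2], ![1, 1, 0]],
  ![![1, -1, -1], ![1, 0, 1], ![1, 2, -1]],
  ![![1, -1, 0], ![1, 1, -2], ![1, 1, 1]],
  ![![1, -1, 0], ![1, 1, -1], ![1, 1, 2]],
  ![![1, -1, 1], ![1, 0, -1], ![1, 2, 1]],
  ![![1, -1, 2], ![1, 5, 2], ![2, 0, -1]],
  ![![1, 0, -2], ![2, -1, 1], ![2, 5, 1]],
  ![![1, 0, 2], ![2, -1, -1], ![2, 5, -1]],
  ![![1, 2, -5], ![1, 2, 1], ![2, -1, 0]],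
  ![![1, 2, -1], ![1, 2, 5], ![2, -1, 0]],
  ![![1, 2, 0], ![2, -1, -5], ![2, -1, 1]],
  ![![1, 2, 0], ![2, -1, -1], ![2, -1, 5]]]

theorem ksBases_orthogonal : ∀ b ∈ ksBases, ∀ i j, i ≠ j → b i ⬝ᵥ b j = 0 := by decide

theorem ksBases_ne_zero : ∀ b ∈ ksBases, ∀ i, b i ≠ 0 := by decide

theorem ksBases_not_colorable (c : (Fin 3 → ℤ) → Prop) (h₀ : c ![1, 0, 0])
    (hc : ∀ b ∈ ksBases, ∃! i, c (b i)) : False := by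
  simp only [ksBases, List.forall_mem_cons, List.not_mem_nil, IsEmpty.forall_iff,
    implies_true, and_true, existsUnique_fin_three_iff, Matrix.cons_val] at hc
  grind

/-- **Kochen–Specker theorem, projection formulation.**  Let `H` be a finite-dimensional
complex Hilbert space with `dim H > 2`.  Then there is no function `w` assigning to every
orthogonal projection `P` on `H` (i.e. every bounded operator with `P = P* = P²`) a value
`w P ∈ {0, 1}` such that for every finite family of mutually orthogonal projections
`P₁, …, Pₙ` summing to the identity, exactly one of the values `w P₁, …, w Pₙ` equals `1`. -/
theorem kochen_specker_projections
    {H : Type*} [NormedAddCommGroup H] [InnerProductSpace ℂ H]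
    [FiniteDimensional ℂ H] (hdim : 2 < Module.finrank ℂ H) :
    ¬ ∃ w : (H →L[ℂ] H) → ℝ,
        (∀ P : H →L[ℂ] H, IsSelfAdjoint P → P * P = P → w P = 0 ∨ w P = 1) ∧
        (∀ (n : ℕ) (P : Fin n → (H →L[ℂ] H)),
          (∀ i, IsSelfAdjoint (P i)) →
          (∀ i, P i * P i = P i) →
          (∀ i j, i ≠ j → P i * P j = 0) →
          (∑ i, P i = 1) →
          ∃! i, w (P i) = 1) := by
  rintro ⟨w, -, hw⟩
  have hΦ : IsKSColoring fun P : H →L[ℂ] H => w P = 1 := hw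
  obtain ⟨m, e, he⟩ := hΦ.exists_orthonormalBasis_sum_iff_eq_inl hdim (0 : Fin 3)
  refine ksBases_not_colorable (fun x => w (ℂ ∙ latticeEmbed e x).starProjection = 1) ?_
    fun b hb => hΦ.existsUnique_latticeEmbed e (fun k h => Sum.inr_ne_inl ((he _).1 h))
      (ksBases_ne_zero b hb) fun i j => ksBases_orthogonal b hb i j
  rw [show (![1, 0, 0] : Fin 3 → ℤ) = Pi.single 0 1 by decide, latticeEmbed_single]
  exact (he _).2 rfl
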